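/- arXiv:2603.10836 — 2 statements merged into one kernel-verified Lean document; each statement's English description precedes it below -/
import Mathlib

section
/- Let α : ℝ → ℝ be monotone nondecreasing with α(0) = 0, and let h : ℝ → ℝ be differentiable with h(0) ≥ 0 and h′(t) ≥ −α(h(t)) for all t ≥ 0. Then h(t) ≥ 0 for all t ≥ 0. -/
/-- The scalar forward-invariance principle underlying Lemma 1 (ZCBFs): if
`α : ℝ → ℝ` is monotone nondecreasing with `α(0) = 0` and `h : ℝ → ℝ` is
differentiable with `h(0) ≥ 0` and `h′(t) ≥ −α(h(t))` for all `t ≥ 0`, then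
`h(t) ≥ 0` for all `t ≥ 0`. -/
theorem stmt_9 (α h : ℝ → ℝ) (hα : Monotone α) (hα0 : α 0 = 0)
    (hdiff : Differentiable ℝ h) (h0 : 0 ≤ h 0)
    (hineq : ∀ t, 0 ≤ t → -α (h t) ≤ deriv h t) :
    ∀ t, 0 ≤ t → 0 ≤ h t := by
  intro t ht
  by_contra hneg
  push_neg at hneg
  -- the set of points in [0,t] where h is nonnegative
  set S : Set ℝ := Set.Icc 0 t ∩ {s | 0 ≤ h s} with hS
  have hScpt : IsCompact S :=
    isCompact_Icc.inter_right (isClosed_le continuous_const hdiff.continuous)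
  have hSne : S.Nonempty := ⟨0, ⟨le_refl 0, ht⟩, h0⟩
  obtain ⟨hs₀mem, hs₀pos⟩ := hScpt.sSup_mem hSne
  set s₀ := sSup S with hs₀
  have hs₀0 : (0:ℝ) ≤ s₀ := hs₀mem.1
  have hs₀t : s₀ ≤ t := hs₀mem.2
  -- on (s₀, t], h is negative
  have hnegon : ∀ s, s₀ < s → s ≤ t → h s < 0 := by
    intro s hs hst
    by_contra hc
    push_neg at hc
    have : s ∈ S := ⟨⟨le_trans hs₀0 hs.le, hst⟩, hc⟩
    exact absurd (le_csSup hScpt.bddAbove this) (not_le.mpr hs)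
  -- h is monotone on [s₀, t]
  have hmono : MonotoneOn h (Set.Icc s₀ t) := by
    apply monotoneOn_of_deriv_nonneg (convex_Icc s₀ t) hdiff.continuous.continuousOn
      (fun x _ => (hdiff x).differentiableWithinAt)
    intro x hx
    rw [interior_Icc] at hx
    have hx0 : (0:ℝ) ≤ x := le_trans hs₀0 hx.1.le
    have hhx : h x < 0 := hnegon x hx.1 hx.2.le
    have : α (h x) ≤ 0 := hα0 ▸ hα hhx.le
    linarith [hineq x hx0]
  have h1 : 0 ≤ h s₀ := hs₀pos
  have h2 := hmono (Set.left_mem_Icc.mpr hs₀t) (Set.right_mem_Icc.mpr hs₀t) hs₀t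
  linarith
end

section
/- Let α : ℝ → ℝ be monotone nondecreasing with α(0) = 0, let ĥ : ℝ → ℝ be differentiable with ĥ(0) ≥ 0 and ĥ′(t) ≥ −α(ĥ(t)) for all t ≥ 0, and let h : ℝ → ℝ satisfy h(t) > ĥ(t) for all t ≥ 0. Then h(t) > 0 for all t ≥ 0. -/
/-- The safety conclusion of Theorem 2: if the reconstructed CBF `ĥ` is
differentiable, starts nonnegative and satisfies the ZCBF condition
`ĥ′(t) ≥ −α(ĥ(t))` for a nondecreasing `α` with `α(0) = 0`, and the original
coupled CBF `h` satisfies `h(t) > ĥ(t)` for all `t ≥ 0` (positive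
reconstruction error), then `h(t) > 0` for all `t ≥ 0`. -/
theorem stmt_10 (α hhat h : ℝ → ℝ) (hα : Monotone α) (hα0 : α 0 = 0)
    (hdiff : Differentiable ℝ hhat) (h0 : 0 ≤ hhat 0)
    (hineq : ∀ t, 0 ≤ t → -α (hhat t) ≤ deriv hhat t)
    (hgt : ∀ t, 0 ≤ t → hhat t < h t) :
    ∀ t, 0 ≤ t → 0 < h t := by
  have key : ∀ T, 0 ≤ T → 0 ≤ hhat T := by
    intro T hT
    by_contra hneg
    push_neg at hneg
    set A : Set ℝ := {t | t ∈ Set.Icc (0:ℝ) T ∧ 0 ≤ hhat t} with hA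
    have hAc : IsCompact A := by
      apply (isCompact_Icc (a := (0:ℝ)) (b := T)).inter_right
      exact isClosed_le continuous_const hdiff.continuous
    have hAne : A.Nonempty := ⟨0, ⟨le_refl 0, hT⟩, h0⟩
    obtain ⟨s, hsA, hsub⟩ := hAc.exists_isGreatest hAne
    have hs0 : 0 ≤ s := hsA.1.1
    have hsT : s ≤ T := hsA.1.2
    have hshhat : 0 ≤ hhat s := hsA.2
    have hsltT : s < T := lt_of_le_of_ne hsT (by rintro rfl; exact absurd hshhat (not_le.2 hneg))
    -- on (s, T], hhat < 0
    have hlt : ∀ t ∈ Set.Ioc s T, hhat t < 0 := by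
      intro t ht
      by_contra hge
      push_neg at hge
      have : t ∈ A := ⟨⟨hs0.trans ht.1.le, ht.2⟩, hge⟩
      exact absurd (hsub this) (not_le.2 ht.1)
    have hmono : MonotoneOn hhat (Set.Icc s T) := by
      apply monotoneOn_of_deriv_nonneg (convex_Icc s T)
        hdiff.continuous.continuousOn
        (hdiff.differentiableOn.mono interior_subset)
      intro t ht
      rw [interior_Icc] at ht
      have ht0 : 0 ≤ t := hs0.trans ht.1.le
      have h1 : α (hhat t) ≤ 0 := by
        have := hα (le_of_lt (hlt t ⟨ht.1, ht.2.le⟩))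
        rwa [hα0] at this
      linarith [hineq t ht0]
    have := hmono (Set.left_mem_Icc.2 hsT) (Set.right_mem_Icc.2 hsT) hsT
    linarith
  intro t ht
  exact (key t ht).trans_lt (hgt t ht)
end
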